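/- arXiv:1411.0900 — 3 statements merged into one kernel-verified Lean document; each statement's English description precedes it below -/
import Mathlib

section
/- Let H be a Hilbert space and let μ̂ = (1/n)∑_{i=1}^n Y_i where Y_1,…,Y_n are i.i.d. H-valued random variables with mean μ and E‖Y_1‖² < ∞. Set λ = c n^{−β} with c > 0 and β > 1, and define μ̌_λ = μ̂/(1+λ). If ‖μ‖² < A·E‖Y_1‖² where A = 2^{1/β}β / (2^{1/β}β + c^{1/β}(β−1)^{(β−1)/β}), then for all n ≥ 1, E‖μ̌_λ − μ‖² < E‖μ̂ − μ‖². -/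
open MeasureTheory ProbabilityTheory
open scoped RealInnerProductSpace

/-! Write `μ̂` for the sample mean and `Δ = E‖μ̂ - μ‖²`. Since
`a • μ̂ - μ = a • (μ̂ - μ) + (a - 1) • μ` with a centred first summand, the risk of `a • μ̂` is
`a² Δ + (1 - a)² ‖μ‖²`, and independence gives `Δ = (E‖Y‖² - ‖μ‖²) / n`. For `a = 1 / (1 + λ)`
the risk is below `Δ` iff `n λ ‖μ‖² < (2 + λ) (E‖Y‖² - ‖μ‖²)`, which follows from
`‖μ‖² < A E‖Y‖²` once `A (2 + (n + 1) λ) ≤ 2 + λ`. With `λ = c n^(-β)` this last bound becomes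
`2^(1/β) β λ^(1 - 1/β) ≤ (β - 1)^(1 - 1/β) (2 + λ)`, which is weighted AM-GM for
`2 + λ = (1/β) (2β) + (1 - 1/β) (βλ / (β - 1))`. -/

lemma two_rpow_mul_rpow_le {β t : ℝ} (hβ : 1 < β) (ht : 0 ≤ t) :
    2 ^ (1 / β) * β * t ^ ((β - 1) / β) ≤ (β - 1) ^ ((β - 1) / β) * (2 + t) := by
  have hβ0 : 0 < β := by linarith
  have hβ1 : 0 < β - 1 := by linarith
  set w := (β - 1) / β with hw
  have hsum : 1 / β + w = 1 := by rw [hw]; field_simp; ring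
  have hβw : β ^ (1 / β) * β ^ w = β := by rw [← Real.rpow_add hβ0, hsum, Real.rpow_one]
  have hamgm := Real.geom_mean_le_arith_mean2_weighted (p₁ := 2 * β) (p₂ := β * t / (β - 1))
    (by positivity) (by positivity) (by positivity) (by positivity) hsum
  rw [Real.mul_rpow (by norm_num) hβ0.le, Real.div_rpow (by positivity) hβ1.le,
    Real.mul_rpow hβ0.le ht] at hamgm
  calc 2 ^ (1 / β) * β * t ^ w
      = 2 ^ (1 / β) * β ^ (1 / β) * (β ^ w * t ^ w / (β - 1) ^ w) * (β - 1) ^ w := by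
        nth_rewrite 2 [← hβw]
        field_simp
    _ ≤ (1 / β * (2 * β) + w * (β * t / (β - 1))) * (β - 1) ^ w := by gcongr
    _ = (β - 1) ^ w * (2 + t) := by rw [hw]; field_simp

lemma mul_mul_rpow_neg_eq {x c β : ℝ} (hx : 0 < x) (hc : 0 < c) (hβ : β ≠ 0) :
    x * (c * x ^ (-β)) = c ^ (1 / β) * (c * x ^ (-β)) ^ ((β - 1) / β) := by
  rw [Real.mul_rpow hc.le (by positivity), ← Real.rpow_mul hx.le,
    show -β * ((β - 1) / β) = 1 + -β by field_simp; ring, Real.rpow_add hx, Real.rpow_one,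
    ← mul_assoc (c ^ (1 / β)), ← Real.rpow_add hc,
    show 1 / β + (β - 1) / β = 1 by field_simp; ring, Real.rpow_one]
  ring

lemma shrinkage_weight_mul_le {x c β : ℝ} (hx : 0 < x) (hc : 0 < c) (hβ : 1 < β) :
    2 ^ (1 / β) * β / (2 ^ (1 / β) * β + c ^ (1 / β) * (β - 1) ^ ((β - 1) / β)) *
      (2 + (x + 1) * (c * x ^ (-β))) ≤ 2 + c * x ^ (-β) := by
  set lam := c * x ^ (-β)
  have hlam : 0 < lam := by positivity
  have key : 2 ^ (1 / β) * β * (x * lam) ≤ c ^ (1 / β) * (β - 1) ^ ((β - 1) / β) * (2 + lam) :=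
    calc 2 ^ (1 / β) * β * (x * lam)
        = c ^ (1 / β) * (2 ^ (1 / β) * β * lam ^ ((β - 1) / β)) := by
          rw [mul_mul_rpow_neg_eq hx hc (by linarith)]; ring
      _ ≤ c ^ (1 / β) * ((β - 1) ^ ((β - 1) / β) * (2 + lam)) :=
          mul_le_mul_of_nonneg_left (two_rpow_mul_rpow_le hβ hlam.le) (by positivity)
      _ = _ := by ring
  rw [div_mul_eq_mul_div, div_le_iff₀ (by positivity)]
  linarith

lemma shrinkage_risk_lt {lam N M S A : ℝ} (hlam : 0 < lam) (hN : 0 < N) (hS : 0 ≤ S)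
    (hsmall : M < A * S) (hA : A * (2 + (N + 1) * lam) ≤ 2 + lam) :
    ((1 + lam)⁻¹) ^ 2 * ((S - M) / N) + (1 - (1 + lam)⁻¹) ^ 2 * M < (S - M) / N := by
  have key : N * lam * M < (2 + lam) * (S - M) := by
    have : (2 + (N + 1) * lam) * M < (2 + lam) * S :=
      calc (2 + (N + 1) * lam) * M < (2 + (N + 1) * lam) * (A * S) := by gcongr
        _ = A * (2 + (N + 1) * lam) * S := by ring
        _ ≤ (2 + lam) * S := by gcongr
    linarith
  have hgap : (S - M) / N - (((1 + lam)⁻¹) ^ 2 * ((S - M) / N) + (1 - (1 + lam)⁻¹) ^ 2 * M) =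
      lam * ((2 + lam) * (S - M) - N * lam * M) / (N * (1 + lam) ^ 2) := by
    field_simp
    ring
  rw [← sub_pos, hgap]
  exact div_pos (mul_pos hlam (by linarith)) (by positivity)

lemma inv_card_smul_sum_const {ι E : Type*} [Fintype ι] [Nonempty ι] [AddCommGroup E]
    [Module ℝ E] (v : E) : (Fintype.card ι : ℝ)⁻¹ • ∑ _i : ι, v = v := by
  rw [Finset.sum_const, Finset.card_univ, ← Nat.cast_smul_eq_nsmul ℝ, smul_smul,
    inv_mul_cancel₀ (Nat.cast_ne_zero.2 Fintype.card_ne_zero), one_smul]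

section

variable {Ω H : Type*} [MeasurableSpace Ω] {P : Measure Ω}
  [NormedAddCommGroup H] [InnerProductSpace ℝ H]

lemma integrable_inner_of_memLp_two {f g : Ω → H} (hf : MemLp f 2 P) (hg : MemLp g 2 P) :
    Integrable (fun ω => ⟪f ω, g ω⟫) P :=
  (hf.norm.integrable_mul hg.norm).mono (hf.1.inner hg.1)
    (ae_of_all _ fun ω => by simpa using abs_real_inner_le_norm (f ω) (g ω))

variable [CompleteSpace H]

lemma integral_norm_smul_sub_sq [IsProbabilityMeasure P] {g : Ω → H} (hg : MemLp g 2 P)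
    (a : ℝ) (v : H) :
    ∫ ω, ‖a • g ω - v‖ ^ 2 ∂P =
      a ^ 2 * ∫ ω, ‖g ω - ∫ ω', g ω' ∂P‖ ^ 2 ∂P + ‖a • ∫ ω, g ω ∂P - v‖ ^ 2 := by
  set m := ∫ ω, g ω ∂P
  set w := a • m - v
  have hcentered : MemLp (fun ω => g ω - m) 2 P := hg.sub (memLp_const m)
  have hpt : ∀ ω,
      ‖a • g ω - v‖ ^ 2 = a ^ 2 * ‖g ω - m‖ ^ 2 + 2 * a * ⟪w, g ω - m⟫ + ‖w‖ ^ 2 := by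
    intro ω
    rw [show a • g ω - v = a • (g ω - m) + w by simp only [w, smul_sub]; abel,
      norm_add_sq_real, norm_smul, mul_pow, Real.norm_eq_abs, sq_abs, real_inner_smul_left,
      real_inner_comm]
    ring
  have hcross : ∫ ω, ⟪w, g ω - m⟫ ∂P = 0 := by
    rw [integral_inner (hcentered.integrable one_le_two), integral_sub
      (hg.integrable one_le_two) (integrable_const m), integral_const]
    simp [m]
  simp_rw [hpt]
  rw [integral_add _ (integrable_const _), integral_add, integral_const_mul, integral_const_mul,
    hcross, integral_const]
  · simp
  · exact (hcentered.integrable_norm_pow two_ne_zero).const_mul _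
  · exact ((hcentered.integrable one_le_two).const_inner w).const_mul _
  · exact ((hcentered.integrable_norm_pow two_ne_zero).const_mul _).add
      (((hcentered.integrable one_le_two).const_inner w).const_mul _)

variable [MeasurableSpace H] [BorelSpace H] {ι : Type*} [Fintype ι]

lemma integral_norm_sum_sq_of_pairwise_indepFun [IsFiniteMeasure P] {Z : ι → Ω → H}
    (hZ : ∀ i, MemLp (Z i) 2 P)
    (hmean : ∀ i, ∫ ω, Z i ω ∂P = 0) (hindep : Pairwise fun i j => IndepFun (Z i) (Z j) P) :
    ∫ ω, ‖∑ i, Z i ω‖ ^ 2 ∂P = ∑ i, ∫ ω, ‖Z i ω‖ ^ 2 ∂P := by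
  classical
  have hint : ∀ i j, Integrable (fun ω => ⟪Z i ω, Z j ω⟫) P := fun i j =>
    integrable_inner_of_memLp_two (hZ i) (hZ j)
  have hcross : ∀ i j, ∫ ω, ⟪Z i ω, Z j ω⟫ ∂P = if i = j then ∫ ω, ‖Z i ω‖ ^ 2 ∂P else 0 := by
    intro i j
    split_ifs with hij
    · subst hij; simp_rw [real_inner_self_eq_norm_sq]
    · exact ((hindep hij).integral_bilin ((hZ i).integrable one_le_two)
        ((hZ j).integrable one_le_two) (innerSL ℝ)).trans (by simp [hmean])
  simp_rw [← real_inner_self_eq_norm_sq, sum_inner, inner_sum]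
  rw [integral_finsetSum _ fun i _ => integrable_finsetSum _ fun j _ => hint i j]
  simp_rw [integral_finsetSum _ fun j _ => hint _ j, hcross, Finset.sum_ite_eq,
    Finset.mem_univ]

lemma integral_norm_sampleMean_sub_sq [IsProbabilityMeasure P] {Y : ι → Ω → H} {μ : H}
    (hY : ∀ i, MemLp (Y i) 2 P) (hmean : ∀ i, ∫ ω, Y i ω ∂P = μ)
    (hindep : Pairwise fun i j => IndepFun (Y i) (Y j) P)
    (hident : ∀ i j, IdentDistrib (Y i) (Y j) P P) (i₀ : ι) :
    ∫ ω, ‖(Fintype.card ι : ℝ)⁻¹ • ∑ i, Y i ω - μ‖ ^ 2 ∂P =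
      (∫ ω, ‖Y i₀ ω‖ ^ 2 ∂P - ‖μ‖ ^ 2) / Fintype.card ι := by
  have : Nonempty ι := ⟨i₀⟩
  set N : ℝ := (Fintype.card ι : ℝ)
  have hcentered : ∀ ω, N⁻¹ • ∑ i, Y i ω - μ = N⁻¹ • ∑ i, (Y i ω - μ) := fun ω => by
    rw [Finset.sum_sub_distrib, smul_sub, inv_card_smul_sum_const]
  have hsum := integral_norm_sum_sq_of_pairwise_indepFun (Z := fun i ω => Y i ω - μ)
    (fun i => (hY i).sub (memLp_const μ))
    (fun i => by simp [integral_sub ((hY i).integrable one_le_two), hmean])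
    (fun i j hij => (hindep hij).comp (measurable_id.sub_const μ) (measurable_id.sub_const μ))
  have hsame : ∀ i, ∫ ω, ‖Y i ω - μ‖ ^ 2 ∂P = ∫ ω, ‖Y i₀ ω - μ‖ ^ 2 ∂P := fun i =>
    ((hident i i₀).comp ((measurable_id.sub_const μ).norm.pow_const 2)).integral_eq
  have hvar := integral_norm_smul_sub_sq (hY i₀) 1 0
  simp only [one_smul, one_pow, one_mul, sub_zero, hmean] at hvar
  simp_rw [hcentered, norm_smul, mul_pow, integral_const_mul, hsum, hsame, Finset.sum_const,
    Finset.card_univ, nsmul_eq_mul, hvar, Real.norm_eq_abs, sq_abs]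
  have hN : N ≠ 0 := Nat.cast_ne_zero.2 Fintype.card_ne_zero
  field_simp
  ring

lemma integral_norm_smul_sampleMean_sub_sq [IsProbabilityMeasure P] {Y : ι → Ω → H} {μ : H}
    (hY : ∀ i, MemLp (Y i) 2 P) (hmean : ∀ i, ∫ ω, Y i ω ∂P = μ)
    (hindep : Pairwise fun i j => IndepFun (Y i) (Y j) P)
    (hident : ∀ i j, IdentDistrib (Y i) (Y j) P P) (i₀ : ι) (a : ℝ) :
    ∫ ω, ‖a • ((Fintype.card ι : ℝ)⁻¹ • ∑ i, Y i ω) - μ‖ ^ 2 ∂P =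
      a ^ 2 * ((∫ ω, ‖Y i₀ ω‖ ^ 2 ∂P - ‖μ‖ ^ 2) / Fintype.card ι) + (1 - a) ^ 2 * ‖μ‖ ^ 2 := by
  have : Nonempty ι := ⟨i₀⟩
  set N : ℝ := (Fintype.card ι : ℝ)
  have hmemLp : MemLp (fun ω => N⁻¹ • ∑ i, Y i ω) 2 P :=
    (memLp_finsetSum _ fun i _ => hY i).const_smul N⁻¹
  have hsampleMean : ∫ ω, N⁻¹ • ∑ i, Y i ω ∂P = μ := by
    rw [integral_smul, integral_finsetSum _ fun i _ => (hY i).integrable one_le_two]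
    simp only [hmean]
    exact inv_card_smul_sum_const μ
  rw [integral_norm_smul_sub_sq hmemLp, hsampleMean,
    integral_norm_sampleMean_sub_sq hY hmean hindep hident i₀,
    show a • μ - μ = (a - 1) • μ by rw [sub_smul, one_smul], norm_smul, mul_pow,
    Real.norm_eq_abs, sq_abs]
  ring

end

theorem stmt1_general {H : Type*} [NormedAddCommGroup H] [InnerProductSpace ℝ H]
    [CompleteSpace H] [MeasurableSpace H] [BorelSpace H] [SecondCountableTopology H]
    {Ω : Type*} [MeasurableSpace Ω] (P : Measure Ω) [IsProbabilityMeasure P]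
    (n : ℕ) (Y : Fin n → Ω → H)
    (hmeas : ∀ i, Measurable (Y i))
    (hindep : iIndepFun Y P)
    (hident : ∀ i j, IdentDistrib (Y i) (Y j) P P)
    (μ : H) (hmean : ∀ i, ∫ ω, Y i ω ∂P = μ)
    (hL2 : ∀ i, Integrable (fun ω => ‖Y i ω‖ ^ 2) P)
    (c β : ℝ) (hc : 0 < c) (hβ : 1 < β)
    (lam : ℝ) (hlam : lam = c * (n : ℝ) ^ (-β))
    (A : ℝ)
    (hA : A = 2 ^ (1 / β) * β /
        (2 ^ (1 / β) * β + c ^ (1 / β) * (β - 1) ^ ((β - 1) / β)))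
    (i₀ : Fin n)
    (hsmall : ‖μ‖ ^ 2 < A * ∫ ω, ‖Y i₀ ω‖ ^ 2 ∂P) :
    (∫ ω, ‖(1 + lam)⁻¹ • ((n : ℝ)⁻¹ • ∑ i, Y i ω) - μ‖ ^ 2 ∂P)
      < ∫ ω, ‖((n : ℝ)⁻¹ • ∑ i, Y i ω) - μ‖ ^ 2 ∂P := by
  have hn : (0 : ℝ) < n := Nat.cast_pos.2 i₀.pos
  have hY : ∀ i, MemLp (Y i) 2 P := fun i =>
    (memLp_two_iff_integrable_sq_norm (hmeas i).aestronglyMeasurable).2 (hL2 i)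
  have hpair : Pairwise fun i j => IndepFun (Y i) (Y j) P := fun i j hij => hindep.indepFun hij
  have hshrunk := integral_norm_smul_sampleMean_sub_sq hY hmean hpair hident i₀ (1 + lam)⁻¹
  have hplain := integral_norm_sampleMean_sub_sq hY hmean hpair hident i₀
  simp only [Fintype.card_fin] at hshrunk hplain
  rw [hshrunk, hplain]
  subst hlam hA
  exact shrinkage_risk_lt (by positivity) hn
    (integral_nonneg fun ω => by positivity) hsmall (shrinkage_weight_mul_le hn hc hβ)

/-- Theorem 1(ii): with `λ = c n^{-β}`, `β > 1`, the shrinkage estimator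
`μ̂/(1+λ)` strictly improves on the empirical mean `μ̂` of i.i.d. Hilbert-space
valued variables whenever `‖μ‖² < A · E‖Y₁‖²`. -/
theorem stmt1 {H : Type*} [NormedAddCommGroup H] [InnerProductSpace ℝ H]
    [CompleteSpace H] [MeasurableSpace H] [BorelSpace H] [SecondCountableTopology H]
    {Ω : Type*} [MeasurableSpace Ω] (P : Measure Ω) [IsProbabilityMeasure P]
    (n : ℕ) (hn : 0 < n) (Y : Fin n → Ω → H)
    (hmeas : ∀ i, Measurable (Y i))
    (hindep : iIndepFun Y P)
    (hident : ∀ i j, IdentDistrib (Y i) (Y j) P P)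
    (μ : H) (hmean : ∀ i, ∫ ω, Y i ω ∂P = μ)
    (hL2 : ∀ i, Integrable (fun ω => ‖Y i ω‖ ^ 2) P)
    (c β : ℝ) (hc : 0 < c) (hβ : 1 < β)
    (lam : ℝ) (hlam : lam = c * (n : ℝ) ^ (-β))
    (A : ℝ)
    (hA : A = 2 ^ (1 / β) * β /
        (2 ^ (1 / β) * β + c ^ (1 / β) * (β - 1) ^ ((β - 1) / β)))
    (i₀ : Fin n)
    (hsmall : ‖μ‖ ^ 2 < A * ∫ ω, ‖Y i₀ ω‖ ^ 2 ∂P) :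
    (∫ ω, ‖(1 + lam)⁻¹ • ((n : ℝ)⁻¹ • ∑ i, Y i ω) - μ‖ ^ 2 ∂P)
      < ∫ ω, ‖((n : ℝ)⁻¹ • ∑ i, Y i ω) - μ‖ ^ 2 ∂P :=
  stmt1_general P n Y hmeas hindep hident μ hmean hL2 c β hc hβ lam hlam A hA i₀ hsmall
end

section
/- For c > 0 and β > 1, the infimum over all real n > 0 of the quantity (c² + 2c n^β)/(n c² + c² + 2c n^β) equals 2^{1/β}β / (2^{1/β}β + c^{1/β}(β−1)^{(β−1)/β}). -/
/-- The infimum over real `n > 0` of `(c² + 2cn^β)/(nc² + c² + 2cn^β)` equals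
`2^{1/β}β / (2^{1/β}β + c^{1/β}(β−1)^{(β−1)/β})`. -/
theorem stmt2 (c β : ℝ) (hc : 0 < c) (hβ : 1 < β) :
    IsGLB {y : ℝ | ∃ n : ℝ, 0 < n ∧
        y = (c ^ 2 + 2 * c * n ^ β) / (n * c ^ 2 + c ^ 2 + 2 * c * n ^ β)}
      (2 ^ (1 / β) * β /
        (2 ^ (1 / β) * β + c ^ (1 / β) * (β - 1) ^ ((β - 1) / β))) := by
  have hβ0 : (0:ℝ) < β := by linarith
  set b : ℝ := β - 1 with hb_def
  have hb : 0 < b := by simp only [hb_def]; linarith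
  set t : ℝ := (c / (2 * b)) ^ (1 / β) with ht_def
  have ht : 0 < t := Real.rpow_pos_of_pos (by positivity) _
  have htβ : t ^ β = c / (2 * b) := by
    rw [ht_def, ← Real.rpow_mul (by positivity), one_div_mul_cancel hβ0.ne',
      Real.rpow_one]
  have h2 : (0:ℝ) < (2:ℝ) ^ (1 / β) := Real.rpow_pos_of_pos two_pos _
  have hbp : (0:ℝ) < b ^ (1 / β) := Real.rpow_pos_of_pos hb _
  have hbb : b / β = 1 - 1 / β := by field_simp; exact hb_def
  have key : c ^ (1 / β) * b ^ (b / β) = 2 ^ (1 / β) * (b * t) := by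
    rw [ht_def, Real.div_rpow hc.le (by positivity),
      Real.mul_rpow (by norm_num) hb.le, hbb, Real.rpow_sub hb, Real.rpow_one]
    field_simp
  have hm : 2 ^ (1 / β) * β / (2 ^ (1 / β) * β + c ^ (1 / β) * b ^ (b / β))
      = β / (β + b * t) := by
    rw [key, ← mul_add, mul_div_mul_left _ _ h2.ne']
  rw [hm]
  have hden : (0:ℝ) < β + b * t := by positivity
  apply IsLeast.isGLB
  constructor
  · -- membership: attained at n = t
    refine ⟨t, ht, ?_⟩
    rw [htβ]
    have hden2 : (0:ℝ) < t * c ^ 2 + c ^ 2 + 2 * c * (c / (2 * b)) := by positivity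
    rw [div_eq_div_iff hden.ne' hden2.ne']
    field_simp
    ring
  · rintro y ⟨n, hn, rfl⟩
    have hnβ : (0:ℝ) < n ^ β := Real.rpow_pos_of_pos hn _
    have hD : (0:ℝ) < n * c ^ 2 + c ^ 2 + 2 * c * n ^ β := by positivity
    rw [div_le_div_iff₀ hden hD]
    -- key inequality from Bernoulli: (n/t)^β ≥ 1 + β (n/t - 1)
    have hbern : 1 + β * (n / t - 1) ≤ (n / t) ^ β := by
      have := one_add_mul_self_le_rpow_one_add (s := n / t - 1)
        (by have : 0 < n / t := div_pos hn ht; linarith) (p := β) hβ.le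
      simpa using this
    have hdiv : (n / t) ^ β = n ^ β / t ^ β := Real.div_rpow hn.le ht.le β
    rw [hdiv, htβ] at hbern
    -- from hbern: n^β ≥ (c/(2b)) * (1 + β(n/t - 1))
    have hkey : β * n * c ≤ b * t * (c + 2 * n ^ β) := by
      have h1 : (c / (2 * b)) * (1 + β * (n / t - 1)) ≤ n ^ β := by
        rw [← le_div_iff₀' (by positivity)]
        exact hbern
      have h2' : c * t + c * β * n - c * β * t ≤ 2 * b * t * n ^ β := by
        have := mul_le_mul_of_nonneg_left h1 (by positivity : (0:ℝ) ≤ 2 * b * t)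
        calc c * t + c * β * n - c * β * t
            = 2 * b * t * ((c / (2 * b)) * (1 + β * (n / t - 1))) := by
              field_simp; ring
          _ ≤ 2 * b * t * n ^ β := this
      have hbt : b * t * c = c * β * t - c * t := by rw [hb_def]; ring
      nlinarith [h2', hbt]
    nlinarith [mul_le_mul_of_nonneg_left hkey hc.le]
end

section
/- Let H be a real Hilbert space and A, B self-adjoint Hilbert–Schmidt operators on H with eigenvalues (σ_i) and (τ_j) and spectra contained in [a,b]. If r : [a,b] → ℝ satisfies |r(σ_i) − r(τ_j)| ≤ L|σ_i − τ_j| for all pairs of eigenvalues, then ‖r(A) − r(B)‖_{HS} ≤ L‖A − B‖_{HS}. -/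
/-!
Conjugating by the orthogonal matrices `Uᵀ` and `V` preserves the sum of squared entries and turns
`U diag(f) Uᵀ - V diag(g) Vᵀ` into the matrix with entries `Wᵢⱼ (fᵢ - gⱼ)`, where `W = Uᵀ V`.
Both sides of the inequality thus become weighted sums `∑ Wᵢⱼ² (·)²` with the same weights, to
which the hypothesis on pairs of eigenvalues applies term by term.
-/

open Matrix

namespace Matrix

variable {R m n : Type*} [CommRing R] [Fintype m] [Fintype n]

theorem sum_sum_sq_eq_trace_transpose_mul (M : Matrix m n R) :
    ∑ i, ∑ j, M i j ^ 2 = trace (Mᵀ * M) := by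
  simp only [trace, diag, mul_apply, transpose_apply, sq]
  exact Finset.sum_comm

theorem sum_sum_sq_transpose_mul_mul [DecidableEq m] [DecidableEq n]
    {U : Matrix m m R} {V : Matrix n n R} (hU : Uᵀ * U = 1) (hV : Vᵀ * V = 1)
    (M : Matrix m n R) :
    ∑ i, ∑ j, (Uᵀ * M * V) i j ^ 2 = ∑ i, ∑ j, M i j ^ 2 := by
  have hU' : U * Uᵀ = 1 := mul_eq_one_comm.mp hU
  have hV' : V * Vᵀ = 1 := mul_eq_one_comm.mp hV
  rw [sum_sum_sq_eq_trace_transpose_mul, sum_sum_sq_eq_trace_transpose_mul]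
  calc trace ((Uᵀ * M * V)ᵀ * (Uᵀ * M * V))
      = trace (Vᵀ * (Mᵀ * (U * Uᵀ) * M * V)) := by
        simp only [transpose_mul, transpose_transpose, Matrix.mul_assoc]
    _ = trace (Mᵀ * M) := by
        rw [hU', Matrix.mul_one, trace_mul_comm, Matrix.mul_assoc, hV', Matrix.mul_one]

theorem transpose_mul_conj_diagonal_sub_mul [DecidableEq n]
    {U V : Matrix n n R} (hU : Uᵀ * U = 1) (hV : Vᵀ * V = 1) (f g : n → R) :
    Uᵀ * (U * diagonal f * Uᵀ - V * diagonal g * Vᵀ) * V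
      = diagonal f * (Uᵀ * V) - (Uᵀ * V) * diagonal g := by
  simp only [Matrix.mul_sub, Matrix.sub_mul, ← Matrix.mul_assoc, hU, Matrix.one_mul]
  simp only [Matrix.mul_assoc, hV, Matrix.mul_one]

theorem sum_sum_sq_conj_diagonal_sub [DecidableEq n]
    {U V : Matrix n n R} (hU : Uᵀ * U = 1) (hV : Vᵀ * V = 1) (f g : n → R) :
    ∑ i, ∑ j, (U * diagonal f * Uᵀ - V * diagonal g * Vᵀ) i j ^ 2
      = ∑ i, ∑ j, (Uᵀ * V) i j ^ 2 * (f i - g j) ^ 2 := by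
  rw [← sum_sum_sq_transpose_mul_mul hU hV, transpose_mul_conj_diagonal_sub_mul hU hV]
  simp only [sub_apply, diagonal_mul, mul_diagonal]
  congr! 2
  ring

end Matrix

theorem Real.sqrt_sum_sum_mul_sq_le {m n : Type*} [Fintype m] [Fintype n] {L : ℝ} (hL : 0 ≤ L)
    (w x y : m → n → ℝ) (hw : ∀ i j, 0 ≤ w i j) (hxy : ∀ i j, |x i j| ≤ L * |y i j|) :
    √(∑ i, ∑ j, w i j * x i j ^ 2) ≤ L * √(∑ i, ∑ j, w i j * y i j ^ 2) := by
  have hsq : ∀ i j, x i j ^ 2 ≤ L ^ 2 * y i j ^ 2 := fun i j => by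
    rw [← sq_abs (x i j), ← sq_abs (y i j), ← mul_pow]
    exact pow_le_pow_left₀ (abs_nonneg _) (hxy i j) 2
  calc √(∑ i, ∑ j, w i j * x i j ^ 2)
      ≤ √(L ^ 2 * ∑ i, ∑ j, w i j * y i j ^ 2) := by
        simp only [Finset.mul_sum]
        refine Real.sqrt_le_sqrt (Finset.sum_le_sum fun i _ => Finset.sum_le_sum fun j _ => ?_)
        calc w i j * x i j ^ 2 ≤ w i j * (L ^ 2 * y i j ^ 2) :=
              mul_le_mul_of_nonneg_left (hsq i j) (hw i j)
          _ = L ^ 2 * (w i j * y i j ^ 2) := by ring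
    _ = L * √(∑ i, ∑ j, w i j * y i j ^ 2) := by
        rw [Real.sqrt_mul (sq_nonneg L), Real.sqrt_sq hL]

theorem stmt14_general (n : ℕ) (L : ℝ) (hL : 0 ≤ L)
    (A B U V : Matrix (Fin n) (Fin n) ℝ) (σ τ : Fin n → ℝ) (r : ℝ → ℝ)
    (hU : Uᵀ * U = 1) (hV : Vᵀ * V = 1)
    (hA : A = U * Matrix.diagonal σ * Uᵀ) (hB : B = V * Matrix.diagonal τ * Vᵀ)
    (hr : ∀ i j, |r (σ i) - r (τ j)| ≤ L * |σ i - τ j|) :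
    Real.sqrt (∑ i, ∑ j,
        ((U * Matrix.diagonal (r ∘ σ) * Uᵀ - V * Matrix.diagonal (r ∘ τ) * Vᵀ) i j) ^ 2)
      ≤ L * Real.sqrt (∑ i, ∑ j, ((A - B) i j) ^ 2) := by
  rw [hA, hB, sum_sum_sq_conj_diagonal_sub hU hV, sum_sum_sq_conj_diagonal_sub hU hV]
  exact Real.sqrt_sum_sum_mul_sq_le hL _ _ _ (fun i j => sq_nonneg _) hr

/-- Lemma 1 (Maurer): if `A = U diag(σ) Uᵀ` and `B = V diag(τ) Vᵀ` are
symmetric with spectra in `[a,b]` and `|r(σᵢ) − r(τⱼ)| ≤ L|σᵢ − τⱼ|` for all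
pairs of eigenvalues, then `‖r(A) − r(B)‖_F ≤ L‖A − B‖_F` (Frobenius norm). -/
theorem stmt14 (n : ℕ) (a b L : ℝ) (hL : 0 ≤ L)
    (A B U V : Matrix (Fin n) (Fin n) ℝ) (σ τ : Fin n → ℝ) (r : ℝ → ℝ)
    (hU : Uᵀ * U = 1) (hV : Vᵀ * V = 1)
    (hA : A = U * Matrix.diagonal σ * Uᵀ) (hB : B = V * Matrix.diagonal τ * Vᵀ)
    (hσ : ∀ i, σ i ∈ Set.Icc a b) (hτ : ∀ j, τ j ∈ Set.Icc a b)
    (hr : ∀ i j, |r (σ i) - r (τ j)| ≤ L * |σ i - τ j|) :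
    Real.sqrt (∑ i, ∑ j,
        ((U * Matrix.diagonal (r ∘ σ) * Uᵀ - V * Matrix.diagonal (r ∘ τ) * Vᵀ) i j) ^ 2)
      ≤ L * Real.sqrt (∑ i, ∑ j, ((A - B) i j) ^ 2) :=
  stmt14_general n L hL A B U V σ τ r hU hV hA hB hr
end
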